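/- Let n ≥ 2, p, q ∈ (0,1), let the prior on Θ_n be uniform, fix θ ∈ Θ_n, let γ ∈ (0,1), and let D : 𝒳_n → 𝒫(Θ_n) be any map with Π(D(x) | X^n = x) ≥ 1 − γ for all x ∈ 𝒳_n (a credible set of credible level 1 − γ). Then D(X^n) is a confidence set of confidence level: P_θ(θ ∈ D(X^n)) ≥ 1 − (n/(2(1 − γ)))·ρ(p,q)^{n/2}·exp(n·ρ(p,q)^{n/2}). -/

import Mathlib

/-!
On the event `θ ∉ D x` the posterior puts mass at least `1 - γ` on `Θ_n \ {θ}`, so by Markov's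
inequality `P_θ(θ ∉ D) ≤ E_θ[Π(Θ_n \ {θ} | X)] / (1 - γ)`. For `η ≠ θ` the evidence dominates
`p_θ + p_η`, so `E_θ[p_η / Z] ≤ ½ ∑ₓ √(p_θ p_η)`, the Hellinger affinity of the two graph laws;
it tensorises over edges to `ρ ^ (h (n - h))`, `h` the Hamming distance, and `h (n - h) ≥ n k / 2`.
Since `Θ_n` contains no complementary pair, `∑_{η ≠ θ} t ^ k(θ, η) ≤ (1 + t) ^ n - 1 ≤ n t e^{n t}`
for `t = ρ ^ (n / 2)`.
-/

open Finset Real Filter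

/-- The set of potential edges of an `n`-vertex graph: pairs `(i,j)` with `i < j`. -/
abbrev Edge (n : ℕ) := {e : Fin n × Fin n // e.1 < e.2}

/-- An observed graph: an edge indicator for each potential edge. -/
abbrev ObsGraph (n : ℕ) := Edge n → Bool

/-- Edge probability under assignment `θ`: `p` within communities, `q` between. -/
noncomputable def edgeProb {n : ℕ} (p q : ℝ) (θ : Fin n → Bool) (e : Edge n) : ℝ :=
  if θ e.val.1 = θ e.val.2 then p else q

/-- Probability mass function of the observed graph under `θ`. -/
noncomputable def graphPMF {n : ℕ} (p q : ℝ) (θ : Fin n → Bool) (x : ObsGraph n) : ℝ :=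
  ∏ e : Edge n, if x e then edgeProb p q θ e else 1 - edgeProb p q θ e

/-- Hellinger affinity of Bernoulli parameters. -/
noncomputable def rho (p q : ℝ) : ℝ := Real.sqrt (p * q) + Real.sqrt ((1 - p) * (1 - q))

/-- Edges whose probability changes from `p` to `q` when replacing `θ` by `η`. -/
def D1 {n : ℕ} (θ η : Fin n → Bool) : Finset (Fin n × Fin n) :=
  Finset.univ.filter fun e => e.1 < e.2 ∧ θ e.1 = θ e.2 ∧ η e.1 ≠ η e.2

/-- Edges whose probability changes from `q` to `p` when replacing `θ` by `η`. -/
def D2 {n : ℕ} (θ η : Fin n → Bool) : Finset (Fin n × Fin n) :=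
  Finset.univ.filter fun e => e.1 < e.2 ∧ θ e.1 ≠ θ e.2 ∧ η e.1 = η e.2

/-- Hamming distance. -/
def hdist {n : ℕ} (θ η : Fin n → Bool) : ℕ := (Finset.univ.filter fun i => θ i ≠ η i).card

/-- The metric `k(θ,η) = h(θ,η) ∧ (n - h(θ,η))`. -/
def kdist {n : ℕ} (θ η : Fin n → Bool) : ℕ := min (hdist θ η) (n - hdist θ η)

/-- Size of the smallest community. -/
def countOnes {n : ℕ} (θ : Fin n → Bool) : ℕ := (Finset.univ.filter fun i => θ i = true).card

/-- The parameter space `Θ_n`. -/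
def Theta (n : ℕ) : Finset (Fin n → Bool) :=
  Finset.univ.filter fun θ => 2 * countOnes θ ≤ n ∧
    ∀ i : Fin n, 2 * countOnes θ = n → (i : ℕ) = 0 → θ i = false

/-- Posterior mass of `A ⊆ Θ_n` given data `x`, under prior mass function `π`. -/
noncomputable def postMass {n : ℕ} (p q : ℝ) (pri : (Fin n → Bool) → ℝ)
    (A : Finset (Fin n → Bool)) (x : ObsGraph n) : ℝ :=
  (∑ η ∈ A, pri η * graphPMF p q η x) / (∑ η ∈ Theta n, pri η * graphPMF p q η x)

/-- `P_θ`-expectation of the posterior mass of `A`. -/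
noncomputable def expPostMass {n : ℕ} (p q : ℝ) (pri : (Fin n → Bool) → ℝ)
    (θ : Fin n → Bool) (A : Finset (Fin n → Bool)) : ℝ :=
  ∑ x : ObsGraph n, graphPMF p q θ x * postMass p q pri A x

/-- The uniform prior on `Θ_n`. -/
noncomputable def unifPrior (n : ℕ) : (Fin n → Bool) → ℝ := fun _ => ((2:ℝ) ^ (n - 1))⁻¹

/-- Hamming ball `B_n(θ,k)` inside `Θ_n`. -/
def hball {n : ℕ} (θ : Fin n → Bool) (k : ℕ) : Finset (Fin n → Bool) :=
  (Theta n).filter fun η => kdist η θ ≤ k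

lemma two_mul_sqrt_mul_le_add {a b : ℝ} (ha : 0 ≤ a) (hb : 0 ≤ b) : 2 * √(a * b) ≤ a + b := by
  rw [Real.sqrt_mul ha]
  nlinarith [sq_nonneg (√a - √b), Real.sq_sqrt ha, Real.sq_sqrt hb]

lemma mul_div_le_sqrt_mul_div_two {a b Z : ℝ} (ha : 0 ≤ a) (hb : 0 ≤ b) (hZ : a + b ≤ Z) :
    a * b / Z ≤ √(a * b) / 2 := by
  have hab := two_mul_sqrt_mul_le_add ha hb
  rcases (show 0 ≤ Z by linarith).eq_or_lt with rfl | hZ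
  · simp only [div_zero]; positivity
  rw [div_le_div_iff₀ hZ two_pos]
  calc a * b * 2 = √(a * b) * (2 * √(a * b)) := by
        nlinarith [Real.mul_self_sqrt (mul_nonneg ha hb)]
    _ ≤ √(a * b) * Z := by gcongr; linarith

lemma one_add_pow_sub_one_le {t : ℝ} (ht : 0 ≤ t) (n : ℕ) :
    (1 + t) ^ n - 1 ≤ n * t * exp (n * t) := by
  have hpow : (1 + t) ^ n ≤ exp (n * t) := by
    rw [Real.exp_nat_mul]
    gcongr
    linarith [add_one_le_exp t]
  have hexp := mul_le_mul_of_nonneg_right (one_sub_le_exp_neg (n * t)) (exp_pos (n * t)).le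
  rw [← exp_add, neg_add_cancel, exp_zero] at hexp
  linarith

lemma pow_mul_sub_le_rpow_half_pow_min {r : ℝ} (hr0 : 0 < r) (hr1 : r ≤ 1) {h n : ℕ}
    (hhn : h ≤ n) : r ^ (h * (n - h)) ≤ (r ^ ((n : ℝ) / 2)) ^ min h (n - h) := by
  have hexp : n * min h (n - h) ≤ 2 * (h * (n - h)) := by
    obtain ⟨k, rfl⟩ := Nat.exists_eq_add_of_le hhn
    rw [Nat.add_sub_cancel_left]
    rcases le_total h k with hk | hk
    · rw [min_eq_left hk]; nlinarith
    · rw [min_eq_right hk]; nlinarith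
  rw [← Real.rpow_natCast, ← Real.rpow_mul_natCast hr0.le]
  apply Real.rpow_le_rpow_of_exponent_ge hr0 hr1
  rw [div_mul_eq_mul_div, div_le_iff₀ two_pos]
  exact_mod_cast (by linarith : n * min h (n - h) ≤ h * (n - h) * 2)

lemma card_filter_lt_mem_iff_notMem {α : Type*} [LinearOrder α] [Fintype α] (s : Finset α) :
    #{e : α × α | e.1 < e.2 ∧ (e.1 ∈ s ↔ e.2 ∉ s)} = #s * #sᶜ := by
  rw [← card_product]
  refine card_nbij' (fun e => if e.1 ∈ s then e else e.swap)
    (fun e => (min e.1 e.2, max e.1 e.2)) ?_ ?_ ?_ ?_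
  · rintro ⟨a, b⟩ h
    simp only [coe_filter, Set.mem_ofPred_eq, mem_univ, true_and] at h
    by_cases ha : a ∈ s <;> simp_all
  · rintro ⟨a, b⟩ h
    simp only [coe_product, Set.mem_prod, mem_coe, mem_compl] at h
    have hab : a ≠ b := by rintro rfl; exact h.2 h.1
    rcases hab.lt_or_gt with hab | hab <;> simp [hab, hab.le, h.1, h.2]
  · rintro ⟨a, b⟩ h
    simp only [coe_filter, Set.mem_ofPred_eq, mem_univ, true_and] at h
    by_cases ha : a ∈ s <;> simp [ha, h.1.le]
  · rintro ⟨a, b⟩ h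
    simp only [coe_product, Set.mem_prod, mem_coe, mem_compl] at h
    have hab : a ≠ b := by rintro rfl; exact h.2 h.1
    rcases hab.lt_or_gt with hab | hab <;> simp [hab.le, h.1, h.2]

lemma sum_le_sum_mul_div_of_le {ι : Type*} {s t : Finset ι} (hst : s ⊆ t) {w f : ι → ℝ} {c : ℝ}
    (hc : 0 < c) (hw : ∀ i ∈ t, 0 ≤ w i) (hf : ∀ i ∈ t, 0 ≤ f i) (hcf : ∀ i ∈ s, c ≤ f i) :
    ∑ i ∈ s, w i ≤ (∑ i ∈ t, w i * f i) / c := by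
  rw [le_div_iff₀ hc, sum_mul]
  calc ∑ i ∈ s, w i * c ≤ ∑ i ∈ s, w i * f i :=
        sum_le_sum fun i hi => mul_le_mul_of_nonneg_left (hcf i hi) (hw i (hst hi))
    _ ≤ ∑ i ∈ t, w i * f i :=
        sum_le_sum_of_subset_of_nonneg hst fun i hi _ => mul_nonneg (hw i hi) (hf i hi)

noncomputable def edgeLik {n : ℕ} (p q : ℝ) (θ : Fin n → Bool) (e : Edge n) (b : Bool) : ℝ :=
  if b then edgeProb p q θ e else 1 - edgeProb p q θ e

def discEdges {n : ℕ} (θ η : Fin n → Bool) : Finset (Edge n) :=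
  {e | (θ e.1.1 = θ e.1.2) ≠ (η e.1.1 = η e.1.2)}

section SBM

variable {n : ℕ} {p q : ℝ}

lemma graphPMF_eq_prod (θ : Fin n → Bool) (x : ObsGraph n) :
    graphPMF p q θ x = ∏ e, edgeLik p q θ e (x e) := rfl

lemma edgeLik_nonneg (hp : p ∈ Set.Icc (0 : ℝ) 1) (hq : q ∈ Set.Icc (0 : ℝ) 1)
    (θ : Fin n → Bool) (e : Edge n) (b : Bool) : 0 ≤ edgeLik p q θ e b := by
  unfold edgeLik edgeProb
  split_ifs <;> linarith [hp.1, hp.2, hq.1, hq.2]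

lemma graphPMF_nonneg (hp : p ∈ Set.Icc (0 : ℝ) 1) (hq : q ∈ Set.Icc (0 : ℝ) 1)
    (θ : Fin n → Bool) (x : ObsGraph n) : 0 ≤ graphPMF p q θ x :=
  prod_nonneg fun e _ => edgeLik_nonneg hp hq θ e (x e)

lemma sum_graphPMF (θ : Fin n → Bool) : ∑ x : ObsGraph n, graphPMF p q θ x = 1 := by
  simp_rw [graphPMF_eq_prod]
  rw [← Fintype.prod_sum (fun e b => edgeLik p q θ e b)]
  simp [edgeLik]

lemma rho_pos (hp : p ∈ Set.Ioo (0 : ℝ) 1) (hq : q ∈ Set.Ioo (0 : ℝ) 1) : 0 < rho p q :=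
  add_pos_of_pos_of_nonneg (Real.sqrt_pos.2 (mul_pos hp.1 hq.1)) (Real.sqrt_nonneg _)

lemma rho_le_one (hp : p ∈ Set.Icc (0 : ℝ) 1) (hq : q ∈ Set.Icc (0 : ℝ) 1) : rho p q ≤ 1 := by
  have h1 := two_mul_sqrt_mul_le_add hp.1 hq.1
  have h2 := two_mul_sqrt_mul_le_add (sub_nonneg.2 hp.2) (sub_nonneg.2 hq.2)
  unfold rho
  linarith

lemma sum_sqrt_edgeLik_mul (hp : p ∈ Set.Icc (0 : ℝ) 1) (hq : q ∈ Set.Icc (0 : ℝ) 1)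
    (θ η : Fin n → Bool) (e : Edge n) :
    ∑ b : Bool, √(edgeLik p q θ e b * edgeLik p q η e b) =
      if e ∈ discEdges θ η then rho p q else 1 := by
  have hp' : 0 ≤ 1 - p := sub_nonneg.2 hp.2
  have hq' : 0 ≤ 1 - q := sub_nonneg.2 hq.2
  rw [Fintype.sum_bool]
  by_cases hθ : θ e.1.1 = θ e.1.2 <;> by_cases hη : η e.1.1 = η e.1.2 <;>
    simp [discEdges, edgeLik, edgeProb, rho, hθ, hη, Real.sqrt_mul_self, hp.1, hq.1, hp', hq',
      mul_comm]

lemma sum_sqrt_graphPMF_mul (hp : p ∈ Set.Icc (0 : ℝ) 1) (hq : q ∈ Set.Icc (0 : ℝ) 1)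
    (θ η : Fin n → Bool) :
    ∑ x : ObsGraph n, √(graphPMF p q θ x * graphPMF p q η x) = rho p q ^ #(discEdges θ η) := by
  simp_rw [graphPMF_eq_prod, ← prod_mul_distrib]
  rw [Fintype.sum_congr _ _ fun x => Real.sqrt_prod _ fun e _ =>
      mul_nonneg (edgeLik_nonneg hp hq θ e _) (edgeLik_nonneg hp hq η e _),
    ← Fintype.prod_sum (fun e b => √(edgeLik p q θ e b * edgeLik p q η e b))]
  simp_rw [sum_sqrt_edgeLik_mul hp hq, Fintype.prod_ite_mem, prod_const]

end SBM

section Hamming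

variable {n : ℕ}

lemma card_discEdges (θ η : Fin n → Bool) :
    #(discEdges θ η) = hdist θ η * (n - hdist θ η) := by
  set s : Finset (Fin n) := {i | θ i ≠ η i}
  have hs : n - hdist θ η = #sᶜ := by rw [card_compl, Fintype.card_fin]; rfl
  have hmap : (discEdges θ η).map (Function.Embedding.subtype _) =
      ({e | e.1 < e.2 ∧ (e.1 ∈ s ↔ e.2 ∉ s)} : Finset (Fin n × Fin n)) := by
    ext ⟨i, j⟩
    simp only [discEdges, ne_eq, eq_iff_iff, Finset.mem_map, mem_filter, mem_univ, true_and,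
      Function.Embedding.subtype_apply, Subtype.exists, exists_and_left, exists_prop,
      exists_eq_right_right, Decidable.not_not, s]
    rw [and_comm]
    refine and_congr_right fun _ => ?_
    cases θ i <;> cases θ j <;> cases η i <;> cases η j <;> decide
  rw [hs, hdist, ← card_filter_lt_mem_iff_notMem s, ← hmap, card_map]

lemma hdist_le (θ η : Fin n → Bool) : hdist θ η ≤ n :=
  (card_filter_le _ _).trans_eq (card_fin n)

lemma hdist_self (θ : Fin n → Bool) : hdist θ θ = 0 := by
  simp [hdist]

lemma hdist_not_right (θ η : Fin n → Bool) : hdist θ (fun i => !η i) = n - hdist θ η := by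
  have h : ({i | θ i ≠ !η i} : Finset (Fin n)) = ({i | θ i ≠ η i} : Finset (Fin n))ᶜ := by
    ext i; cases θ i <;> cases η i <;> simp
  rw [hdist, hdist, h, card_compl, Fintype.card_fin]

lemma countOnes_not (η : Fin n → Bool) : countOnes (fun i => !η i) = n - countOnes η := by
  have h : ({i | (!η i) = true} : Finset (Fin n)) = ({i | η i = true} : Finset (Fin n))ᶜ := by
    ext i; cases η i <;> simp
  rw [countOnes, countOnes, h, card_compl, Fintype.card_fin]

lemma bnot_notMem_Theta (hn : 0 < n) {η : Fin n → Bool} (hη : η ∈ Theta n) :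
    (fun i => !η i) ∉ Theta n := by
  intro hη'
  simp only [Theta, mem_filter, mem_univ, true_and] at hη hη'
  have hle : countOnes η ≤ n := (card_filter_le _ _).trans_eq (card_fin n)
  rw [countOnes_not] at hη'
  have h0 := hη.2 ⟨0, hn⟩ (by omega) rfl
  have h0' := hη'.2 ⟨0, hn⟩ (by omega) rfl
  simp [h0] at h0'

lemma sum_pow_hdist (θ : Fin n → Bool) (t : ℝ) :
    ∑ σ : Fin n → Bool, t ^ hdist θ σ = (1 + t) ^ n := by
  have h : ∀ σ : Fin n → Bool, t ^ hdist θ σ = ∏ i, if θ i = σ i then 1 else t := by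
    intro σ
    rw [prod_ite, prod_const_one, one_mul, prod_const]
    rfl
  simp_rw [h]
  rw [← Fintype.prod_sum (fun i b => if θ i = b then (1 : ℝ) else t)]
  calc ∏ i, ∑ b, (if θ i = b then (1 : ℝ) else t) = ∏ _i : Fin n, (1 + t) :=
        prod_congr rfl fun i _ => by cases θ i <;> simp [add_comm]
    _ = (1 + t) ^ n := by simp

end Hamming

lemma sum_Theta_erase_pow_kdist_le {n : ℕ} (hn : 0 < n) {θ : Fin n → Bool} (hθ : θ ∈ Theta n)
    {t : ℝ} (ht : 0 ≤ t) : ∑ η ∈ (Theta n).erase θ, t ^ kdist θ η ≤ (1 + t) ^ n - 1 := by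
  -- `φ η` is whichever of `η`, `!η` is Hamming-closer to `θ`; no complementary pair lies in `Θ_n`,
  -- so `φ` is injective there and misses `θ`.
  let φ : (Fin n → Bool) → (Fin n → Bool) := fun η =>
    if hdist θ η ≤ n - hdist θ η then η else fun i => !η i
  have hφ : ∀ η, kdist θ η = hdist θ (φ η) := by
    intro η
    unfold kdist φ
    split_ifs with h
    · exact min_eq_left h
    · rw [hdist_not_right, min_eq_right (le_of_not_ge h)]
  have hinj : Set.InjOn φ ((Theta n).erase θ) := by
    intro η₁ h₁ η₂ h₂ h
    replace h₁ := mem_of_mem_erase h₁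
    replace h₂ := mem_of_mem_erase h₂
    unfold φ at h
    split_ifs at h
    · exact h
    · exact absurd (h ▸ h₁) (bnot_notMem_Theta hn h₂)
    · exact absurd (h ▸ h₂) (bnot_notMem_Theta hn h₁)
    · funext i; simpa using congrFun h i
  have hmaps : ((Theta n).erase θ).image φ ⊆ univ.erase θ := by
    simp only [subset_iff, mem_image, mem_erase, mem_univ, and_true]
    rintro _ ⟨η, ⟨hηθ, hη⟩, rfl⟩ hφθ
    unfold φ at hφθ
    split_ifs at hφθ
    · exact hηθ hφθ
    · exact bnot_notMem_Theta hn hη (hφθ ▸ hθ)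
  calc ∑ η ∈ (Theta n).erase θ, t ^ kdist θ η
      = ∑ σ ∈ ((Theta n).erase θ).image φ, t ^ hdist θ σ := by
        rw [sum_image hinj]; simp_rw [hφ]
    _ ≤ ∑ σ ∈ univ.erase θ, t ^ hdist θ σ :=
        sum_le_sum_of_subset_of_nonneg hmaps fun _ _ _ => pow_nonneg ht _
    _ = (1 + t) ^ n - 1 := by
        rw [sum_erase_eq_sub (mem_univ θ), sum_pow_hdist, hdist_self, pow_zero]

section Posterior

variable {n : ℕ} {p q : ℝ}

lemma postMass_nonneg (hp : p ∈ Set.Icc (0 : ℝ) 1) (hq : q ∈ Set.Icc (0 : ℝ) 1)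
    {pri : (Fin n → Bool) → ℝ} (hpri : ∀ η, 0 ≤ pri η) (A : Finset (Fin n → Bool))
    (x : ObsGraph n) : 0 ≤ postMass p q pri A x :=
  div_nonneg (sum_nonneg fun η _ => mul_nonneg (hpri η) (graphPMF_nonneg hp hq η x))
    (sum_nonneg fun η _ => mul_nonneg (hpri η) (graphPMF_nonneg hp hq η x))

lemma postMass_mono (hp : p ∈ Set.Icc (0 : ℝ) 1) (hq : q ∈ Set.Icc (0 : ℝ) 1)
    {pri : (Fin n → Bool) → ℝ} (hpri : ∀ η, 0 ≤ pri η) {A B : Finset (Fin n → Bool)}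
    (hAB : A ⊆ B) (x : ObsGraph n) : postMass p q pri A x ≤ postMass p q pri B x :=
  div_le_div_of_nonneg_right
    (sum_le_sum_of_subset_of_nonneg hAB fun η _ _ =>
      mul_nonneg (hpri η) (graphPMF_nonneg hp hq η x))
    (sum_nonneg fun η _ => mul_nonneg (hpri η) (graphPMF_nonneg hp hq η x))

lemma postMass_unifPrior (A : Finset (Fin n → Bool)) (x : ObsGraph n) :
    postMass p q (unifPrior n) A x =
      (∑ η ∈ A, graphPMF p q η x) / ∑ η ∈ Theta n, graphPMF p q η x := by
  simp only [postMass, unifPrior, ← mul_sum]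
  exact mul_div_mul_left _ _ (by positivity)

lemma sum_notMem_le_expPostMass_erase (hp : p ∈ Set.Icc (0 : ℝ) 1)
    (hq : q ∈ Set.Icc (0 : ℝ) 1) {pri : (Fin n → Bool) → ℝ} (hpri : ∀ η, 0 ≤ pri η)
    (θ : Fin n → Bool) {γ : ℝ} (hγ : γ < 1) {D : ObsGraph n → Finset (Fin n → Bool)}
    (hDsub : ∀ x, D x ⊆ Theta n) (hD : ∀ x, 1 - γ ≤ postMass p q pri (D x) x) :
    ∑ x ∈ univ.filter (fun x => θ ∉ D x), graphPMF p q θ x ≤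
      expPostMass p q pri θ ((Theta n).erase θ) / (1 - γ) := by
  refine sum_le_sum_mul_div_of_le (filter_subset _ _) (sub_pos.2 hγ)
    (fun x _ => graphPMF_nonneg hp hq θ x) (fun x _ => postMass_nonneg hp hq hpri _ x) ?_
  intro x hx
  refine (hD x).trans (postMass_mono hp hq hpri (fun η hη => mem_erase.2 ⟨?_, hDsub x hη⟩) x)
  rintro rfl
  exact (mem_filter.1 hx).2 hη

lemma expPostMass_unifPrior_erase_le (hp : p ∈ Set.Icc (0 : ℝ) 1)
    (hq : q ∈ Set.Icc (0 : ℝ) 1) {θ : Fin n → Bool} (hθ : θ ∈ Theta n) :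
    expPostMass p q (unifPrior n) θ ((Theta n).erase θ) ≤
      (∑ η ∈ (Theta n).erase θ, rho p q ^ #(discEdges θ η)) / 2 := by
  have hpair : ∀ η ∈ (Theta n).erase θ, ∀ x,
      graphPMF p q θ x + graphPMF p q η x ≤ ∑ σ ∈ Theta n, graphPMF p q σ x := by
    intro η hη x
    rw [← add_sum_erase _ _ hθ]
    gcongr
    exact single_le_sum (fun σ _ => graphPMF_nonneg hp hq σ x) hη
  calc expPostMass p q (unifPrior n) θ ((Theta n).erase θ)
      = ∑ η ∈ (Theta n).erase θ, ∑ x, graphPMF p q θ x * graphPMF p q η x /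
          ∑ σ ∈ Theta n, graphPMF p q σ x := by
        simp_rw [expPostMass, postMass_unifPrior, mul_div_assoc', mul_sum, sum_div]
        exact sum_comm
    _ ≤ ∑ η ∈ (Theta n).erase θ, ∑ x, √(graphPMF p q θ x * graphPMF p q η x) / 2 := by
        refine sum_le_sum fun η hη => sum_le_sum fun x _ => ?_
        exact mul_div_le_sqrt_mul_div_two (graphPMF_nonneg hp hq θ x)
          (graphPMF_nonneg hp hq η x) (hpair η hη x)
    _ = (∑ η ∈ (Theta n).erase θ, rho p q ^ #(discEdges θ η)) / 2 := by
        simp_rw [← sum_div, sum_sqrt_graphPMF_mul hp hq]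

end Posterior

/-- every credible set of level `1 − γ` is a confidence set of level
`1 − (n/(2(1−γ))) ρ(p,q)^{n/2} exp(n ρ(p,q)^{n/2})`. -/
theorem stmt17 (n : ℕ) (hn : 2 ≤ n) (p q : ℝ) (hp : p ∈ Set.Ioo (0:ℝ) 1)
    (hq : q ∈ Set.Ioo (0:ℝ) 1) (θ : Fin n → Bool) (hθ : θ ∈ Theta n)
    (γ : ℝ) (hγ : γ ∈ Set.Ioo (0:ℝ) 1)
    (D : ObsGraph n → Finset (Fin n → Bool)) (hDsub : ∀ x, D x ⊆ Theta n)
    (hD : ∀ x, 1 - γ ≤ postMass p q (unifPrior n) (D x) x) :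
    1 - ((n : ℝ) / (2 * (1 - γ))) * rho p q ^ ((n : ℝ) / 2)
        * Real.exp ((n : ℝ) * rho p q ^ ((n : ℝ) / 2))
      ≤ ∑ x ∈ Finset.univ.filter (fun x : ObsGraph n => θ ∈ D x),
          graphPMF p q θ x := by
  have hp' := Set.Ioo_subset_Icc_self hp
  have hq' := Set.Ioo_subset_Icc_self hq
  have hγ' : 0 < 1 - γ := sub_pos.2 hγ.2
  have hρ := rho_pos hp hq
  set t := rho p q ^ ((n : ℝ) / 2)
  have ht : 0 ≤ t := by positivity
  have hmiss : ∑ x ∈ univ.filter (fun x => θ ∉ D x), graphPMF p q θ x ≤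
      (n / (2 * (1 - γ))) * t * exp (n * t) :=
    calc _ ≤ expPostMass p q (unifPrior n) θ ((Theta n).erase θ) / (1 - γ) :=
          sum_notMem_le_expPostMass_erase hp' hq' (fun _ => by unfold unifPrior; positivity) θ hγ.2
            hDsub hD
      _ ≤ (∑ η ∈ (Theta n).erase θ, rho p q ^ #(discEdges θ η)) / 2 / (1 - γ) := by
          gcongr; exact expPostMass_unifPrior_erase_le hp' hq' hθ
      _ ≤ (∑ η ∈ (Theta n).erase θ, t ^ kdist θ η) / 2 / (1 - γ) := by
          gcongr with η
          rw [card_discEdges]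
          exact pow_mul_sub_le_rpow_half_pow_min hρ (rho_le_one hp' hq') (hdist_le θ η)
      _ ≤ ((1 + t) ^ n - 1) / 2 / (1 - γ) := by
          gcongr; exact sum_Theta_erase_pow_kdist_le (by omega) hθ ht
      _ ≤ n * t * exp (n * t) / 2 / (1 - γ) := by
          gcongr; exact one_add_pow_sub_one_le ht n
      _ = (n / (2 * (1 - γ))) * t * exp (n * t) := by field_simp
  have hsplit := sum_filter_add_sum_filter_not univ (fun x => θ ∈ D x) (graphPMF p q θ)
  rw [sum_graphPMF] at hsplit
  linarith
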